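/- For every n × n doubly stochastic real matrix X there exist nonnegative real weights a_σ, indexed by the permutations σ of Fin n, with ∑_σ a_σ = 1, such that X = ∑_σ a_σ · P_σ, where P_σ denotes the permutation matrix of σ. -/
import Mathlib

/-- The permutation matrix of a permutation `σ` of `Fin n`:
`(P_σ) i j = 1` if `σ j = i` and `0` otherwise. -/
def permMat {n : ℕ} (σ : Equiv.Perm (Fin n)) : Matrix (Fin n) (Fin n) ℝ :=
  Matrix.of fun i j => if σ j = i then 1 else 0

lemma permMat_eq {n : ℕ} (σ : Equiv.Perm (Fin n)) :
    permMat σ = σ⁻¹.permMatrix ℝ := by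
  ext i j
  simp only [permMat, Matrix.of_apply, Equiv.Perm.permMatrix, PEquiv.toMatrix_apply,
    Equiv.toPEquiv_apply, Option.mem_def, Option.some.injEq]
  congr 1
  simp only [eq_iff_iff]
  exact ⟨fun h => by rw [← h]; simp, fun h => by rw [← h]; simp⟩

/-- **Birkhoff–von Neumann theorem.** Every doubly stochastic matrix is a convex
combination of permutation matrices. -/
theorem birkhoff_von_neumann {n : ℕ} (X : Matrix (Fin n) (Fin n) ℝ)
    (hnonneg : ∀ i j, 0 ≤ X i j)
    (hrow : ∀ i, ∑ j, X i j = 1)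
    (hcol : ∀ j, ∑ i, X i j = 1) :
    ∃ a : Equiv.Perm (Fin n) → ℝ,
      (∀ σ, 0 ≤ a σ) ∧ (∑ σ, a σ = 1) ∧ X = ∑ σ, a σ • permMat σ := by
  have hX : X ∈ doublyStochastic ℝ (Fin n) :=
    mem_doublyStochastic_iff_sum.2 ⟨hnonneg, hrow, hcol⟩
  obtain ⟨w, hw0, hw1, hwX⟩ := exists_eq_sum_perm_of_mem_doublyStochastic hX
  refine ⟨fun σ => w σ⁻¹, fun σ => hw0 _, ?_, ?_⟩
  · rw [← hw1]; exact Equiv.sum_comp (Equiv.inv _) w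
  · rw [← hwX]
    rw [← Equiv.sum_comp (Equiv.inv (Equiv.Perm (Fin n))) (fun σ => w σ⁻¹ • permMat σ)]
    refine Finset.sum_congr rfl fun σ _ => ?_
    simp [permMat_eq]
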